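/- arXiv:0709.0373 — 3 statements merged into one kernel-verified Lean document; each statement's English description precedes it below -/
import Mathlib

section
/- Let B be a finite set of linear subspaces of ℂ^l containing two subspaces u and v with u ⊊ v, and let B' = B \ {u}. Then the natural inclusion of cochain complexes D(B') ↪ D(B) (sending a subset σ ⊆ B' to itself as a subset of B) is a quasi-isomorphism, i.e., it induces an isomorphism H^q(D(B')) ≅ H^q(D(B)) in every degree q. -/
/-!
Formalization of the Yuzvinsky–Feichtner rational model `D(B)` of the
complement of an arrangement of linear subspaces of `ℂ^l`, together with the
deletion/restriction constructions of the paper.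
-/

open scoped Classical

noncomputable section

/-- The type of linear subspaces of `ℂ^l`. -/
abbrev Subsp (l : ℕ) := Submodule ℂ (Fin l → ℂ)

/-- Intersection of a finite set of subspaces (`⊤`, i.e. `ℂ^l`, for the empty set). -/
def inter {l : ℕ} (σ : Finset (Subsp l)) : Subsp l := σ.inf id

/-- Underlying vector space of the Yuzvinsky–Feichtner model: formal ℚ-linear
combinations of finite sets of subspaces (basis elements are the `σ ⊆ B`). -/
abbrev DFull (l : ℕ) := Finset (Subsp l) →₀ ℚ

/-- 1-based position of `x` inside `σ`, with respect to the linear order `r`. -/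
def pos {l : ℕ} (r : LinearOrder (Subsp l)) (σ : Finset (Subsp l)) (x : Subsp l) : ℕ :=
  (σ.filter fun y => r.lt y x).card + 1

/-- Value of the differential on the basis element `σ`:
`dσ = ∑_{j : ∩(σ∖{x_j}) = ∩σ} (−1)^j (σ∖{x_j})`. -/
def dBasis {l : ℕ} (r : LinearOrder (Subsp l)) (σ : Finset (Subsp l)) : DFull l :=
  ∑ x ∈ σ.filter fun x => inter (σ.erase x) = inter σ,
    ((-1 : ℚ) ^ pos r σ x) • Finsupp.single (σ.erase x) (1 : ℚ)

/-- The differential of the Yuzvinsky–Feichtner complex. -/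
def diff {l : ℕ} (r : LinearOrder (Subsp l)) : DFull l →ₗ[ℚ] DFull l :=
  Finsupp.lsum ℚ fun σ => LinearMap.toSpanSingleton ℚ (DFull l) (dBasis r σ)

/-- Codimension of `W` inside the ambient subspace `X` (as an integer). -/
def codimIn {l : ℕ} (X W : Subsp l) : ℤ :=
  (Module.finrank ℂ X : ℤ) - (Module.finrank ℂ (W ⊓ X : Subsp l) : ℤ)

/-- Codimension of `W` in `ℂ^l`. -/
def codim {l : ℕ} (W : Subsp l) : ℤ := codimIn ⊤ W

/-- Degree of the basis element `σ`: `deg σ = 2 codim (∩σ) − |σ|`, the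
codimension being computed inside the ambient space `X`. -/
def degIn {l : ℕ} (X : Subsp l) (σ : Finset (Subsp l)) : ℤ :=
  2 * codimIn X (inter σ) - (σ.card : ℤ)

/-- `D(B)`: the span of the basis elements `σ ⊆ B`. -/
def Dsub {l : ℕ} (B : Finset (Subsp l)) : Submodule ℚ (DFull l) :=
  Submodule.span ℚ {f | ∃ σ : Finset (Subsp l), σ ⊆ B ∧ f = Finsupp.single σ (1 : ℚ)}

/-- The degree-`q` component of `D(B)` (ambient space `X`). -/
def Dcomp {l : ℕ} (X : Subsp l) (B : Finset (Subsp l)) (q : ℤ) : Submodule ℚ (DFull l) :=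
  Submodule.span ℚ
    {f | ∃ σ : Finset (Subsp l), σ ⊆ B ∧ degIn X σ = q ∧ f = Finsupp.single σ (1 : ℚ)}

/-- Degree-`q` cocycles of `D(B)`. -/
def cocycles {l : ℕ} (r : LinearOrder (Subsp l)) (X : Subsp l) (B : Finset (Subsp l)) (q : ℤ) :
    Submodule ℚ (DFull l) :=
  Dcomp X B q ⊓ LinearMap.ker (diff r)

/-- Degree-`q` coboundaries of `D(B)`. -/
def cobounds {l : ℕ} (r : LinearOrder (Subsp l)) (X : Subsp l) (B : Finset (Subsp l)) (q : ℤ) :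
    Submodule ℚ (DFull l) :=
  Dcomp X B q ⊓ Submodule.map (diff r) (Dcomp X B (q - 1))

/-- Degree-`q` cohomology `H^q(D(B))`. -/
abbrev cohomology {l : ℕ} (r : LinearOrder (Subsp l)) (X : Subsp l) (B : Finset (Subsp l)) (q : ℤ) :=
  cocycles r X B q ⧸ Submodule.comap (cocycles r X B q).subtype (cobounds r X B q)

lemma Dcomp_mono {l : ℕ} (X : Subsp l) {B B' : Finset (Subsp l)} (h : B' ⊆ B) (q : ℤ) :
    Dcomp X B' q ≤ Dcomp X B q :=
  Submodule.span_mono (by rintro f ⟨σ, h1, h2, rfl⟩; exact ⟨σ, h1.trans h, h2, rfl⟩)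

lemma cocycles_mono {l : ℕ} (r : LinearOrder (Subsp l)) (X : Subsp l) {B B' : Finset (Subsp l)}
    (h : B' ⊆ B) (q : ℤ) : cocycles r X B' q ≤ cocycles r X B q :=
  inf_le_inf_right _ (Dcomp_mono X h q)

lemma cobounds_mono {l : ℕ} (r : LinearOrder (Subsp l)) (X : Subsp l) {B B' : Finset (Subsp l)}
    (h : B' ⊆ B) (q : ℤ) : cobounds r X B' q ≤ cobounds r X B q :=
  inf_le_inf (Dcomp_mono X h q) (Submodule.map_mono (Dcomp_mono X h (q - 1)))

/-- The map induced in degree-`q` cohomology by an inclusion of arrangements `B' ⊆ B`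
(induced by the inclusion of cochain complexes `D(B') ↪ D(B)`). -/
def inducedMap {l : ℕ} (r : LinearOrder (Subsp l)) (X : Subsp l) {B B' : Finset (Subsp l)}
    (h : B' ⊆ B) (q : ℤ) : cohomology r X B' q →ₗ[ℚ] cohomology r X B q :=
  Submodule.mapQ (Submodule.comap (cocycles r X B' q).subtype (cobounds r X B' q))
    (Submodule.comap (cocycles r X B q).subtype (cobounds r X B q))
    (Submodule.inclusion (cocycles_mono r X h q)) (by
      intro v hv
      simp only [Submodule.mem_comap, Submodule.subtype_apply, Submodule.coe_inclusion] at hv ⊢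
      exact cobounds_mono r X h q hv)

lemma eraseSubset {l : ℕ} (A : Finset (Subsp l)) (x₀ : Subsp l) : A.erase x₀ ⊆ A := by
  intro y hy; exact Finset.mem_of_mem_erase hy

/-- A subspace arrangement: no member is contained in another. -/
def IsArrangement {l : ℕ} (A : Finset (Subsp l)) : Prop :=
  ∀ x ∈ A, ∀ y ∈ A, x ≤ y → x = y

/-- `Ã'' = {x₀ ∩ y | y ∈ A'}`. -/
def tildeRestriction {l : ℕ} (x₀ : Subsp l) (A' : Finset (Subsp l)) : Finset (Subsp l) :=
  A'.image fun y => x₀ ⊓ y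

/-- The restricted arrangement `A''`: the elements of `Ã''` that are not strictly
contained in another element of `Ã''`. -/
def restriction {l : ℕ} (x₀ : Subsp l) (A' : Finset (Subsp l)) : Finset (Subsp l) :=
  (tildeRestriction x₀ A').filter fun w => ∀ w' ∈ tildeRestriction x₀ A', ¬ w < w'

lemma restriction_subset {l : ℕ} (x₀ : Subsp l) (A' : Finset (Subsp l)) :
    restriction x₀ A' ⊆ tildeRestriction x₀ A' := Finset.filter_subset _ _

/-- `x₀` is a separator: `x₀ ∩ (∩ A') ⊊ ∩ A'`. -/
def IsSeparator {l : ℕ} (A : Finset (Subsp l)) (x₀ : Subsp l) : Prop :=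
  x₀ ⊓ inter (A.erase x₀) < inter (A.erase x₀)

/-- The conditions imposed in the paper on the fixed linear order on the
subspaces: `x₀` comes first, the equivalence classes of
`y ∼ z ⟺ x₀ ∩ y = x₀ ∩ z` on `A' = A ∖ {x₀}` are consecutive intervals,
and the order on `Ã''` is compatible with the one on `A'`. -/
def GoodOrder {l : ℕ} (r : LinearOrder (Subsp l)) (A : Finset (Subsp l)) (x₀ : Subsp l) : Prop :=
  (∀ y ∈ A.erase x₀, r.lt x₀ y) ∧
  (∀ y ∈ A.erase x₀, ∀ z ∈ A.erase x₀, ∀ w ∈ A.erase x₀,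
      r.le y z → r.le z w → x₀ ⊓ y = x₀ ⊓ w → x₀ ⊓ y = x₀ ⊓ z) ∧
  (∀ y ∈ A.erase x₀, ∀ z ∈ A.erase x₀, r.lt y z → x₀ ⊓ y ≠ x₀ ⊓ z →
      r.lt (x₀ ⊓ y) (x₀ ⊓ z))

/-- Value of the map `φ` on a basis element `σ`. -/
def phiBasis {l : ℕ} (x₀ : Subsp l) (σ : Finset (Subsp l)) : DFull l :=
  if x₀ ∈ σ ∧ Set.InjOn (fun y => x₀ ⊓ y) ↑(σ.erase x₀) then
    ((-1 : ℚ) ^ (σ.card - 1)) • Finsupp.single ((σ.erase x₀).image fun y => x₀ ⊓ y) (1 : ℚ)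
  else 0

/-- The map `φ : D(A) → D(Ã'')` (defined on the whole ambient space). -/
def phi {l : ℕ} (x₀ : Subsp l) : DFull l →ₗ[ℚ] DFull l :=
  Finsupp.lsum ℚ fun σ => LinearMap.toSpanSingleton ℚ (DFull l) (phiBasis x₀ σ)

lemma phi_apply_single {l : ℕ} (x₀ : Subsp l) (σ : Finset (Subsp l)) :
    phi x₀ (Finsupp.single σ (1 : ℚ)) = phiBasis x₀ σ := by
  simp [phi]

lemma diff_apply_single {l : ℕ} (r : LinearOrder (Subsp l)) (σ : Finset (Subsp l)) :
    diff r (Finsupp.single σ (1 : ℚ)) = dBasis r σ := by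
  simp [diff]

lemma phi_vanish {l : ℕ} (x₀ : Subsp l) {B : Finset (Subsp l)} (hx : x₀ ∉ B) :
    ∀ f ∈ Dsub B, phi x₀ f = 0 := by
  intro f hf
  induction hf using Submodule.span_induction with
  | mem f hfmem =>
      obtain ⟨σ, hσ, rfl⟩ := hfmem
      rw [phi_apply_single]
      have hx₀σ : ¬ x₀ ∈ σ := fun h => hx (hσ h)
      simp [phiBasis, hx₀σ]
  | zero => simp
  | add f g _ _ hf hg => simp [map_add, hf, hg]
  | smul c f _ hf => simp [map_smul, hf]

lemma diff_mem {l : ℕ} (r : LinearOrder (Subsp l)) {B : Finset (Subsp l)} :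
    ∀ f ∈ Dsub B, diff r f ∈ Dsub B := by
  intro f hf
  induction hf using Submodule.span_induction with
  | mem f hfmem =>
      obtain ⟨σ, hσ, rfl⟩ := hfmem
      rw [diff_apply_single, dBasis]
      refine Submodule.sum_mem _ fun x hx => Submodule.smul_mem _ _ ?_
      exact Submodule.subset_span ⟨σ.erase x, (Finset.erase_subset _ _).trans hσ, rfl⟩
  | zero => simp
  | add f g _ _ hf hg => rw [map_add]; exact (Dsub B).add_mem hf hg
  | smul c f _ hf => rw [map_smul]; exact (Dsub B).smul_mem c hf

/-- The quotient cochain complex `D(A)/D(A')`. -/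
abbrev DQuot {l : ℕ} (A : Finset (Subsp l)) (x₀ : Subsp l) :=
  Dsub A ⧸ Submodule.comap (Dsub A).subtype (Dsub (A.erase x₀))

/-- Projection `D(A) → D(A)/D(A')`. -/
def quotProj {l : ℕ} (A : Finset (Subsp l)) (x₀ : Subsp l) : Dsub A →ₗ[ℚ] DQuot A x₀ :=
  (Submodule.comap (Dsub A).subtype (Dsub (A.erase x₀))).mkQ

/-- The differential, restricted to `D(A)`. -/
def diffRes {l : ℕ} (r : LinearOrder (Subsp l)) (A : Finset (Subsp l)) : Dsub A →ₗ[ℚ] Dsub A :=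
  (diff r).restrict fun f hf => diff_mem r f hf

/-- The differential of the quotient complex `D(A)/D(A')`. -/
def diffQuot {l : ℕ} (r : LinearOrder (Subsp l)) (A : Finset (Subsp l)) (x₀ : Subsp l) :
    DQuot A x₀ →ₗ[ℚ] DQuot A x₀ :=
  Submodule.mapQ _ _ (diffRes r A) (by
      intro v hv
      simp only [Submodule.mem_comap, Submodule.subtype_apply] at hv ⊢
      exact diff_mem r _ hv)

/-- The map `φ̄ : D(A)/D(A') → D(Ã'')` induced by `φ`. -/
def phiBar {l : ℕ} (x₀ : Subsp l) (A : Finset (Subsp l)) : DQuot A x₀ →ₗ[ℚ] DFull l :=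
  Submodule.liftQ _ ((phi x₀).comp (Dsub A).subtype) (by
    intro v hv
    simp only [Submodule.mem_comap, Submodule.subtype_apply] at hv
    simp only [LinearMap.mem_ker, LinearMap.comp_apply, Submodule.subtype_apply]
    exact phi_vanish x₀ (Finset.notMem_erase x₀ A) _ hv)

/-- The subspace `I_{u,v}` of `D(A)/D(A')`, as a subspace of `D(A)` before
projecting: spanned by the `{x₀,u,τ} − {x₀,v,τ}` and the `{x₀,u,v,τ}`. -/
def IuvFull {l : ℕ} (A : Finset (Subsp l)) (x₀ u v : Subsp l) : Submodule ℚ (DFull l) :=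
  Submodule.span ℚ
    ({f | ∃ τ : Finset (Subsp l), (↑τ : Set (Subsp l)) ⊆ ↑A \ {x₀, u, v} ∧
        f = Finsupp.single (insert x₀ (insert u τ)) (1 : ℚ)
          - Finsupp.single (insert x₀ (insert v τ)) (1 : ℚ)} ∪
     {f | ∃ τ : Finset (Subsp l), (↑τ : Set (Subsp l)) ⊆ ↑A \ {x₀, u, v} ∧
        f = Finsupp.single (insert x₀ (insert u (insert v τ))) (1 : ℚ)})

/-- The subspace `I_{u,v} ⊆ D(A)/D(A')`. -/
def Iuv {l : ℕ} (A : Finset (Subsp l)) (x₀ u v : Subsp l) : Submodule ℚ (DQuot A x₀) :=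
  Submodule.map (quotProj A x₀) (Submodule.comap (Dsub A).subtype (IuvFull A x₀ u v))

/-- The set `E` of pairs `(y,z)` of distinct elements of `A'` with `x₀ ∩ y = x₀ ∩ z`. -/
def Epairs {l : ℕ} (A : Finset (Subsp l)) (x₀ : Subsp l) : Set (Subsp l × Subsp l) :=
  {p | p.1 ∈ A.erase x₀ ∧ p.2 ∈ A.erase x₀ ∧ x₀ ⊓ p.1 = x₀ ⊓ p.2 ∧ p.1 ≠ p.2}

/-- The subspace `V = Σ_{(u,v) ∈ E} I_{u,v}` of `D(A)/D(A')`. -/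
def Vsub {l : ℕ} (A : Finset (Subsp l)) (x₀ : Subsp l) : Submodule ℚ (DQuot A x₀) :=
  ⨆ p ∈ Epairs A x₀, Iuv A x₀ p.1 p.2

/-- Degree-`q` part of the quotient complex `D(A)/D(A')`. -/
def DcompQuot {l : ℕ} (X : Subsp l) (A : Finset (Subsp l)) (x₀ : Subsp l) (q : ℤ) :
    Submodule ℚ (DQuot A x₀) :=
  Submodule.map (quotProj A x₀) (Submodule.comap (Dsub A).subtype (Dcomp X A q))

def cocyclesQuot {l : ℕ} (r : LinearOrder (Subsp l)) (X : Subsp l) (A : Finset (Subsp l))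
    (x₀ : Subsp l) (q : ℤ) : Submodule ℚ (DQuot A x₀) :=
  DcompQuot X A x₀ q ⊓ LinearMap.ker (diffQuot r A x₀)

def coboundsQuot {l : ℕ} (r : LinearOrder (Subsp l)) (X : Subsp l) (A : Finset (Subsp l))
    (x₀ : Subsp l) (q : ℤ) : Submodule ℚ (DQuot A x₀) :=
  DcompQuot X A x₀ q ⊓ Submodule.map (diffQuot r A x₀) (DcompQuot X A x₀ (q - 1))

/-- Degree-`q` cohomology of the quotient complex `D(A)/D(A')`. -/
abbrev cohomologyQuot {l : ℕ} (r : LinearOrder (Subsp l)) (X : Subsp l) (A : Finset (Subsp l))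
    (x₀ : Subsp l) (q : ℤ) :=
  cocyclesQuot r X A x₀ q ⧸
    Submodule.comap (cocyclesQuot r X A x₀ q).subtype (coboundsQuot r X A x₀ q)

/-- Ungraded cocycles of `D(B)`. -/
def cocyclesAll {l : ℕ} (r : LinearOrder (Subsp l)) (B : Finset (Subsp l)) :
    Submodule ℚ (DFull l) :=
  Dsub B ⊓ LinearMap.ker (diff r)

/-- Ungraded coboundaries of `D(B)`. -/
def coboundsAll {l : ℕ} (r : LinearOrder (Subsp l)) (B : Finset (Subsp l)) :
    Submodule ℚ (DFull l) :=
  Dsub B ⊓ Submodule.map (diff r) (Dsub B)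

/-- Ungraded cohomology `H^*(D(B))`. -/
abbrev cohomologyAll {l : ℕ} (r : LinearOrder (Subsp l)) (B : Finset (Subsp l)) :=
  cocyclesAll r B ⧸ Submodule.comap (cocyclesAll r B).subtype (coboundsAll r B)

/-- The map `θ : D(A') → D(Ã'')`, `{x_{i₁},…,x_{i_r}} ↦ {x₀ ∩ x_{i₁},…,x₀ ∩ x_{i_r}}`. -/
def theta {l : ℕ} (x₀ : Subsp l) : DFull l →ₗ[ℚ] DFull l :=
  Finsupp.lsum ℚ fun σ =>
    LinearMap.toSpanSingleton ℚ (DFull l) (Finsupp.single (σ.image fun y => x₀ ⊓ y) (1 : ℚ))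

/-- The map `k : D(A) → D(A')`, the identity on basis elements not containing
`x₀`, and zero on those containing `x₀`. -/
def kmap {l : ℕ} (x₀ : Subsp l) : DFull l →ₗ[ℚ] DFull l :=
  Finsupp.lsum ℚ fun σ =>
    if x₀ ∈ σ then 0 else LinearMap.toSpanSingleton ℚ (DFull l) (Finsupp.single σ (1 : ℚ))

/-- The Euler characteristic of `D(A)`:
`χ = Σ_q (−1)^q dim_ℚ H^q(D(A))` (all degrees lie in `[−|A|, 2l]`). -/
def eulerChar {l : ℕ} (r : LinearOrder (Subsp l)) (A : Finset (Subsp l)) : ℚ :=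
  ∑ q ∈ Finset.Icc (-(A.card : ℤ)) (2 * l : ℤ),
    (-1 : ℚ) ^ q * (Module.finrank ℚ (cohomology r ⊤ A q) : ℚ)

/-- The intersection lattice `L(A)`: all intersections of members of `A`
(with `ℂ^l = ∩∅` as bottom element), ordered by reverse inclusion. -/
def latticeSet {l : ℕ} (A : Finset (Subsp l)) : Set (Subsp l) :=
  {W | ∃ S : Finset (Subsp l), S ⊆ A ∧ W = inter S}

/-- `covL A a b`: in the intersection lattice `L(A)` (ordered by reverse
inclusion), `b` covers `a`. -/
def covL {l : ℕ} (A : Finset (Subsp l)) (a b : Subsp l) : Prop :=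
  b < a ∧ ∀ c ∈ latticeSet A, ¬(b < c ∧ c < a)

/-- The meet `a ∧ b` in the intersection lattice `L(A)`: the intersection of
the members of `A` containing both `a` and `b`. -/
def meetL {l : ℕ} (A : Finset (Subsp l)) (a b : Subsp l) : Subsp l :=
  inter (A.filter fun x => a ≤ x ∧ b ≤ x)

/-- `L(A)` is a geometric lattice: it is a finite atomistic semimodular lattice.
(Atoms are the elements covering the bottom element `ℂ^l`; every element is the
join — i.e. intersection — of the atoms it lies above; and the lattice is
(upper) semimodular.  The join of `a` and `b` in `L(A)` is `a ⊓ b`.) -/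
def IsGeometricL {l : ℕ} (A : Finset (Subsp l)) : Prop :=
  (∀ a ∈ latticeSet A, a = sInf {t : Subsp l | t ∈ latticeSet A ∧ covL A ⊤ t ∧ a ≤ t}) ∧
  (∀ a ∈ latticeSet A, ∀ b ∈ latticeSet A, covL A (meetL A a b) a → covL A b (a ⊓ b))

end

/-!
Since `u ⊊ v`, adding `v` to a set `σ ∋ u` does not change `∩σ`, so `h σ = ±(σ ∪ {v})` (for
`u ∈ σ`, `v ∉ σ`, and `h σ = 0` otherwise) is an operator of degree `-1`. A direct computation
shows that `P = id - d h - h d` sends every `σ ⊆ B` into `D(B ∖ {u})`; as `h` vanishes on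
`D(B ∖ {u})`, `P` is a retraction onto `D(B ∖ {u})` which is chain homotopic to the identity,
so the inclusion `D(B ∖ {u}) ↪ D(B)` is a homotopy equivalence.
-/

open Finset

noncomputable section

lemma neg_one_pow_eq_neg_of_odd_add {R : Type*} [CommRing R] {m n : ℕ} (h : Odd (m + n)) :
    (-1 : R) ^ m = -(-1) ^ n := by
  have h₁ : (-1 : R) ^ m * (-1) ^ n = -1 := by rw [← pow_add]; exact h.neg_one_pow
  have h₂ : ((-1 : R) ^ n) ^ 2 = 1 := by rw [← pow_mul, mul_comm, pow_mul]; simp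
  linear_combination (-1 : R) ^ n * h₁ - (-1) ^ m * h₂

section Position

variable {l : ℕ} (r : LinearOrder (Subsp l))

lemma pos_erase_add_ite {σ : Finset (Subsp l)} {x : Subsp l} (hx : x ∈ σ) (y : Subsp l) :
    pos r (σ.erase x) y + (if r.lt x y then 1 else 0) = pos r σ y := by
  unfold pos
  rw [filter_erase]
  split_ifs with h
  · have hmem : x ∈ σ.filter fun z => r.lt z y := mem_filter.2 ⟨hx, h⟩
    rw [card_erase_add_one hmem]
  · rw [erase_eq_of_notMem (by simp [h])]

lemma pos_erase_add_pos_erase {σ : Finset (Subsp l)} {x y : Subsp l} (hx : x ∈ σ) (hy : y ∈ σ)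
    (hxy : x ≠ y) : pos r (σ.erase x) y + pos r (σ.erase y) x + 1 = pos r σ x + pos r σ y := by
  have hx' := pos_erase_add_ite r hx y
  have hy' := pos_erase_add_ite r hy x
  rcases @lt_or_gt_of_ne _ r _ _ hxy with h | h <;>
    simp only [h, @lt_asymm _ r.toPreorder _ _ h, ↓reduceIte, add_zero] at hx' hy' <;> omega

end Position

section Intersection

variable {l : ℕ}

lemma inter_insert_of_le {σ : Finset (Subsp l)} {u v : Subsp l} (huv : u ≤ v) (hu : u ∈ σ) :
    inter (insert v σ) = inter σ :=
  inf_insert.trans (inf_eq_right.2 ((inf_le hu).trans huv))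

def removable (σ : Finset (Subsp l)) : Finset (Subsp l) :=
  σ.filter fun x => inter (σ.erase x) = inter σ

lemma mem_removable {σ : Finset (Subsp l)} {x : Subsp l} :
    x ∈ removable σ ↔ x ∈ σ ∧ inter (σ.erase x) = inter σ :=
  mem_filter

lemma mem_removable_of_lt {σ : Finset (Subsp l)} {u v : Subsp l} (huv : u < v) (hu : u ∈ σ)
    (hv : v ∈ σ) : v ∈ removable σ := by
  refine mem_removable.2 ⟨hv, ?_⟩
  conv_rhs => rw [← insert_erase hv]
  exact (inter_insert_of_le huv.le (mem_erase.2 ⟨huv.ne, hu⟩)).symm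

lemma mem_removable_insert_iff {σ : Finset (Subsp l)} {u v x : Subsp l} (huv : u ≤ v)
    (hu : u ∈ σ) (hxu : x ≠ u) (hxv : x ≠ v) :
    x ∈ removable (insert v σ) ↔ x ∈ removable σ := by
  rw [mem_removable, mem_removable, mem_insert, erase_insert_of_ne hxv.symm,
    inter_insert_of_le huv (mem_erase.2 ⟨hxu.symm, hu⟩), inter_insert_of_le huv hu]
  simp [hxv]

lemma removable_insert_erase_erase {σ : Finset (Subsp l)} {u v : Subsp l} (huv : u ≤ v)
    (hu : u ∈ σ) (hv : v ∉ σ) :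
    ((removable (insert v σ)).erase v).erase u = (removable σ).erase u := by
  ext x
  simp only [mem_erase]
  constructor
  · rintro ⟨hxu, hxv, hx⟩
    exact ⟨hxu, (mem_removable_insert_iff huv hu hxu hxv).1 hx⟩
  · rintro ⟨hxu, hx⟩
    have hxv : x ≠ v := ne_of_mem_of_not_mem (mem_removable.1 hx).1 hv
    exact ⟨hxu, hxv, (mem_removable_insert_iff huv hu hxu hxv).2 hx⟩

lemma mem_removable_erase_swap {σ : Finset (Subsp l)} {x y : Subsp l}
    (hx : x ∈ removable σ) (hy : y ∈ removable (σ.erase x)) :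
    y ∈ removable σ ∧ x ∈ removable (σ.erase y) := by
  obtain ⟨hyσx, hy⟩ := mem_removable.1 hy
  obtain ⟨hxσ, hx⟩ := mem_removable.1 hx
  have hxy : x ≠ y := (ne_of_mem_erase hyσx).symm
  have hσyx : inter ((σ.erase y).erase x) = inter σ := by rw [erase_right_comm, hy, hx]
  have hσy : inter (σ.erase y) = inter σ :=
    le_antisymm (hσyx ▸ inf_mono (erase_subset _ _)) (inf_mono (erase_subset _ _))
  exact ⟨mem_removable.2 ⟨mem_of_mem_erase hyσx, hσy⟩,
    mem_removable.2 ⟨mem_erase.2 ⟨hxy, hxσ⟩, hσyx.trans hσy.symm⟩⟩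

lemma degIn_insert_of_le (X : Subsp l) {σ : Finset (Subsp l)} {u v : Subsp l} (huv : u ≤ v)
    (hu : u ∈ σ) (hv : v ∉ σ) : degIn X (insert v σ) = degIn X σ - 1 := by
  rw [degIn, degIn, inter_insert_of_le huv hu, card_insert_of_notMem hv]
  push_cast
  ring

lemma degIn_erase_of_mem_removable (X : Subsp l) {σ : Finset (Subsp l)} {x : Subsp l}
    (hx : x ∈ removable σ) : degIn X (σ.erase x) = degIn X σ + 1 := by
  obtain ⟨hxσ, hinter⟩ := mem_removable.1 hx
  rw [degIn, degIn, hinter, ← card_erase_add_one hxσ]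
  push_cast
  ring

end Intersection

section Differential

variable {l : ℕ}

lemma single_mem_Dcomp (X : Subsp l) {B σ : Finset (Subsp l)} (h : σ ⊆ B) :
    Finsupp.single σ (1 : ℚ) ∈ Dcomp X B (degIn X σ) :=
  Submodule.subset_span ⟨σ, h, rfl, rfl⟩

lemma apply_mem_of_mem_Dcomp {X : Subsp l} {B : Finset (Subsp l)} {q : ℤ}
    {g : DFull l →ₗ[ℚ] DFull l} {M : Submodule ℚ (DFull l)}
    (h : ∀ σ, σ ⊆ B → degIn X σ = q → g (Finsupp.single σ 1) ∈ M) {f : DFull l}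
    (hf : f ∈ Dcomp X B q) : g f ∈ M :=
  (Submodule.span_le (p := M.comap g)).2 (by rintro _ ⟨σ, hσ, hq, rfl⟩; exact h σ hσ hq) hf

variable (r : LinearOrder (Subsp l))

def dTerm (σ : Finset (Subsp l)) (x : Subsp l) : DFull l :=
  ((-1 : ℚ) ^ pos r σ x) • Finsupp.single (σ.erase x) 1

lemma dBasis_eq_sum (σ : Finset (Subsp l)) : dBasis r σ = ∑ x ∈ removable σ, dTerm r σ x := rfl

lemma dTerm_mem_Dcomp (X : Subsp l) {B σ : Finset (Subsp l)} {x : Subsp l}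
    (hσ : σ.erase x ⊆ B) (hx : x ∈ removable σ) : dTerm r σ x ∈ Dcomp X B (degIn X σ + 1) := by
  rw [← degIn_erase_of_mem_removable X hx]
  exact Submodule.smul_mem _ _ (single_mem_Dcomp X hσ)

lemma diff_dBasis (σ : Finset (Subsp l)) : diff r (dBasis r σ) = 0 := by
  have hdd : diff r (dBasis r σ) = ∑ p ∈ (removable σ).sigma fun x => removable (σ.erase x),
      ((-1 : ℚ) ^ (pos r σ p.1 + pos r (σ.erase p.1) p.2)) •
        Finsupp.single ((σ.erase p.1).erase p.2) 1 := by
    rw [dBasis_eq_sum, map_sum, sum_sigma]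
    refine sum_congr rfl fun x _ => ?_
    rw [dTerm, map_smul, diff_apply_single, dBasis_eq_sum, smul_sum]
    exact sum_congr rfl fun y _ => by rw [dTerm, smul_smul, pow_add]
  rw [hdd]
  -- the terms for `(x, y)` and `(y, x)` cancel
  refine sum_involution (fun p _ => ⟨p.2, p.1⟩) ?_ ?_ ?_ fun _ _ => rfl
  · rintro ⟨x, y⟩ hp
    obtain ⟨hx, hy⟩ : x ∈ removable σ ∧ y ∈ removable (σ.erase x) := mem_sigma.1 hp
    have hyσx := (mem_removable.1 hy).1
    have hsum := pos_erase_add_pos_erase r (mem_removable.1 hx).1 (mem_of_mem_erase hyσx)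
      (ne_of_mem_erase hyσx).symm
    have hsign : (-1 : ℚ) ^ (pos r σ x + pos r (σ.erase x) y)
        = -(-1) ^ (pos r σ y + pos r (σ.erase y) x) :=
      neg_one_pow_eq_neg_of_odd_add ⟨pos r σ x + pos r σ y - 1, by omega⟩
    rw [erase_right_comm, ← add_smul, hsign, neg_add_cancel, zero_smul]
  · rintro ⟨x, y⟩ hp _ h
    exact ne_of_mem_erase (mem_removable.1 (mem_sigma.1 hp).2).1 (congrArg Sigma.fst h)
  · rintro ⟨x, y⟩ hp
    obtain ⟨hx, hy⟩ : x ∈ removable σ ∧ y ∈ removable (σ.erase x) := mem_sigma.1 hp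
    obtain ⟨hy', hx'⟩ := mem_removable_erase_swap hx hy
    exact mem_sigma.2 ⟨hy', hx'⟩

lemma diff_diff (f : DFull l) : diff r (diff r f) = 0 := by
  have hdd : diff r ∘ₗ diff r = 0 :=
    Finsupp.lhom_ext' fun σ => LinearMap.ext_ring (by simp [diff_apply_single, diff_dBasis])
  exact LinearMap.congr_fun hdd f

end Differential

section Homotopy

variable {l : ℕ} (r : LinearOrder (Subsp l)) (u v : Subsp l)

def hBasis (σ : Finset (Subsp l)) : DFull l :=
  if u ∈ σ ∧ v ∉ σ then
    ((-1 : ℚ) ^ pos r (insert v σ) v) • Finsupp.single (insert v σ) 1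
  else 0

def homotopy : DFull l →ₗ[ℚ] DFull l :=
  Finsupp.lsum ℚ fun σ => LinearMap.toSpanSingleton ℚ (DFull l) (hBasis r u v σ)

def retraction : DFull l →ₗ[ℚ] DFull l :=
  LinearMap.id - diff r ∘ₗ homotopy r u v - homotopy r u v ∘ₗ diff r

lemma homotopy_single (σ : Finset (Subsp l)) :
    homotopy r u v (Finsupp.single σ 1) = hBasis r u v σ := by
  simp [homotopy]

lemma retraction_apply (f : DFull l) :
    retraction r u v f = f - diff r (homotopy r u v f) - homotopy r u v (diff r f) := rfl

lemma diff_retraction (f : DFull l) :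
    diff r (retraction r u v f) = retraction r u v (diff r f) := by
  simp only [retraction_apply, map_sub, diff_diff, map_zero, sub_zero]

variable {r u v} {σ : Finset (Subsp l)}

lemma hBasis_eq_zero_of_notMem (hu : u ∉ σ) : hBasis r u v σ = 0 :=
  if_neg fun h => hu h.1

lemma hBasis_eq_zero_of_mem (hv : v ∈ σ) : hBasis r u v σ = 0 :=
  if_neg fun h => h.2 hv

lemma hBasis_of_mem_of_notMem (hu : u ∈ σ) (hv : v ∉ σ) :
    hBasis r u v σ = ((-1 : ℚ) ^ pos r (insert v σ) v) • Finsupp.single (insert v σ) 1 :=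
  if_pos ⟨hu, hv⟩

lemma homotopy_dBasis (σ : Finset (Subsp l)) :
    homotopy r u v (dBasis r σ)
      = ∑ x ∈ removable σ, ((-1 : ℚ) ^ pos r σ x) • hBasis r u v (σ.erase x) := by
  rw [dBasis_eq_sum, map_sum]
  exact sum_congr rfl fun x _ => by rw [dTerm, map_smul, homotopy_single]

lemma homotopy_dBasis_of_notMem (hu : u ∉ σ) : homotopy r u v (dBasis r σ) = 0 := by
  rw [homotopy_dBasis]
  exact sum_eq_zero fun x _ => by
    rw [hBasis_eq_zero_of_notMem fun h => hu (mem_of_mem_erase h), smul_zero]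

lemma homotopy_dBasis_of_mem_of_mem (huv : u < v) (hu : u ∈ σ) (hv : v ∈ σ) :
    homotopy r u v (dBasis r σ) = Finsupp.single σ 1 := by
  rw [homotopy_dBasis, sum_eq_single_of_mem v (mem_removable_of_lt huv hu hv)]
  · rw [hBasis_of_mem_of_notMem (mem_erase.2 ⟨huv.ne, hu⟩) (notMem_erase v σ), insert_erase hv,
      smul_smul, ← pow_add, Even.neg_one_pow ⟨_, rfl⟩, one_smul]
  · intro x _ hxv
    rw [hBasis_eq_zero_of_mem (mem_erase.2 ⟨Ne.symm hxv, hv⟩), smul_zero]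

lemma smul_hBasis_erase (hu : u ∈ σ) (hv : v ∉ σ) {x : Subsp l} (hx : x ∈ σ) (hxu : x ≠ u) :
    ((-1 : ℚ) ^ pos r σ x) • hBasis r u v (σ.erase x)
      = -(((-1 : ℚ) ^ pos r (insert v σ) v) • dTerm r (insert v σ) x) := by
  have hvx : v ≠ x := ne_of_mem_of_not_mem hx hv |>.symm
  have hsum := pos_erase_add_pos_erase r (mem_insert_self v σ) (mem_insert_of_mem hx) hvx
  rw [erase_insert hv, erase_insert_of_ne hvx] at hsum
  have hsign : (-1 : ℚ) ^ (pos r σ x + pos r (insert v (σ.erase x)) v)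
      = -(-1) ^ (pos r (insert v σ) v + pos r (insert v σ) x) :=
    neg_one_pow_eq_neg_of_odd_add ⟨pos r (insert v σ) v + pos r (insert v σ) x - 1, by omega⟩
  rw [hBasis_of_mem_of_notMem (mem_erase.2 ⟨hxu.symm, hu⟩) fun h => hv (mem_of_mem_erase h),
    dTerm, erase_insert_of_ne hvx, smul_smul, smul_smul, ← neg_smul, ← pow_add, ← pow_add, hsign]

lemma homotopy_dBasis_of_mem_of_notMem (huv : u ≤ v) (hu : u ∈ σ) (hv : v ∉ σ) :
    homotopy r u v (dBasis r σ) = -(((-1 : ℚ) ^ pos r (insert v σ) v) •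
      ∑ x ∈ ((removable (insert v σ)).erase v).erase u, dTerm r (insert v σ) x) := by
  have hu0 : ((-1 : ℚ) ^ pos r σ u) • hBasis r u v (σ.erase u) = 0 := by
    rw [hBasis_eq_zero_of_notMem (notMem_erase u σ), smul_zero]
  rw [homotopy_dBasis, ← sum_erase (removable σ) hu0, removable_insert_erase_erase huv hu hv,
    smul_sum, ← sum_neg_distrib]
  refine sum_congr rfl fun x hx => ?_
  obtain ⟨hxu, hxR⟩ := mem_erase.1 hx
  exact smul_hBasis_erase hu hv (mem_removable.1 hxR).1 hxu

lemma retraction_single_of_mem_of_notMem (huv : u < v) (hu : u ∈ σ) (hv : v ∉ σ) :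
    retraction r u v (Finsupp.single σ 1) =
      if u ∈ removable (insert v σ) then
        -(((-1 : ℚ) ^ pos r (insert v σ) v) • dTerm r (insert v σ) u)
      else 0 := by
  -- the `v`-face of `d(hσ)` is `σ`; its faces other than `u` and `v` cancel against `h(dσ)`
  have hσ : Finsupp.single σ (1 : ℚ)
      = ((-1 : ℚ) ^ pos r (insert v σ) v) • dTerm r (insert v σ) v := by
    rw [dTerm, erase_insert hv, smul_smul, ← pow_add, Even.neg_one_pow ⟨_, rfl⟩, one_smul]
  have hvR := mem_removable_of_lt huv (mem_insert_of_mem hu) (mem_insert_self v σ)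
  rw [retraction_apply, homotopy_single, hBasis_of_mem_of_notMem hu hv, map_smul,
    diff_apply_single, diff_apply_single, dBasis_eq_sum,
    homotopy_dBasis_of_mem_of_notMem huv.le hu hv, ← add_sum_erase _ _ hvR, hσ]
  split_ifs with huR
  · rw [← add_sum_erase _ _ (mem_erase.2 ⟨huv.ne, huR⟩)]
    module
  · rw [erase_eq_of_notMem fun h => huR (mem_of_mem_erase h)]
    module

lemma retraction_single_mem_Dcomp (X : Subsp l) {B : Finset (Subsp l)} (hvB : v ∈ B)
    (huv : u < v) (hσ : σ ⊆ B) :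
    retraction r u v (Finsupp.single σ 1) ∈ Dcomp X (B.erase u) (degIn X σ) := by
  by_cases hu : u ∈ σ
  · by_cases hv : v ∈ σ
    · rw [retraction_apply, homotopy_single, hBasis_eq_zero_of_mem hv, map_zero, diff_apply_single,
        homotopy_dBasis_of_mem_of_mem huv hu hv, sub_zero, sub_self]
      exact zero_mem _
    · rw [retraction_single_of_mem_of_notMem huv hu hv]
      split_ifs with huR
      · have hmem := dTerm_mem_Dcomp r X (erase_subset_erase u (insert_subset hvB hσ)) huR
        rw [degIn_insert_of_le X huv.le hu hv, sub_add_cancel] at hmem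
        exact neg_mem (Submodule.smul_mem _ _ hmem)
      · exact zero_mem _
  · rw [retraction_apply, homotopy_single, hBasis_eq_zero_of_notMem hu, map_zero,
      diff_apply_single, homotopy_dBasis_of_notMem hu, sub_zero, sub_zero]
    exact single_mem_Dcomp X fun x hx => mem_erase.2 ⟨ne_of_mem_of_not_mem hx hu, hσ hx⟩

variable {X : Subsp l} {B : Finset (Subsp l)} {q : ℤ} {f : DFull l}

lemma retraction_mem_Dcomp (hvB : v ∈ B) (huv : u < v) (hf : f ∈ Dcomp X B q) :
    retraction r u v f ∈ Dcomp X (B.erase u) q :=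
  apply_mem_of_mem_Dcomp (fun _ hσ hq => hq ▸ retraction_single_mem_Dcomp X hvB huv hσ) hf

lemma homotopy_mem_Dcomp (hvB : v ∈ B) (huv : u ≤ v) (hf : f ∈ Dcomp X B q) :
    homotopy r u v f ∈ Dcomp X B (q - 1) := by
  refine apply_mem_of_mem_Dcomp (fun σ hσ hq => ?_) hf
  rw [homotopy_single]
  by_cases h : u ∈ σ ∧ v ∉ σ
  · have hmem := single_mem_Dcomp X (insert_subset hvB hσ)
    rw [degIn_insert_of_le X huv h.1 h.2, hq] at hmem
    rw [hBasis_of_mem_of_notMem h.1 h.2]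
    exact Submodule.smul_mem _ _ hmem
  · rw [hBasis, if_neg h]
    exact zero_mem _

lemma homotopy_eq_zero_of_mem_Dcomp (hf : f ∈ Dcomp X (B.erase u) q) : homotopy r u v f = 0 :=
  (Submodule.mem_bot ℚ).1 <| apply_mem_of_mem_Dcomp (M := ⊥) (fun σ hσ _ => by
    rw [Submodule.mem_bot, homotopy_single,
      hBasis_eq_zero_of_notMem fun h => notMem_erase u B (hσ h)]) hf

end Homotopy

section Cohomology

variable {l : ℕ} (r : LinearOrder (Subsp l)) (X : Subsp l) {B B' : Finset (Subsp l)}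

lemma inducedMap_injective (h : B' ⊆ B) (q : ℤ)
    (H : ∀ z ∈ cocycles r X B' q, z ∈ cobounds r X B q → z ∈ cobounds r X B' q) :
    Function.Injective (inducedMap r X h q) := by
  rw [← LinearMap.ker_eq_bot, eq_bot_iff]
  intro x hx
  obtain ⟨z, rfl⟩ := Submodule.Quotient.mk_surjective _ x
  rw [LinearMap.mem_ker, inducedMap, Submodule.mapQ_apply, Submodule.Quotient.mk_eq_zero] at hx
  exact (Submodule.mem_bot ℚ).2 ((Submodule.Quotient.mk_eq_zero _).2 (H z z.2 hx))

lemma inducedMap_surjective (h : B' ⊆ B) (q : ℤ)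
    (H : ∀ z ∈ cocycles r X B q, ∃ z' ∈ cocycles r X B' q, z' - z ∈ cobounds r X B q) :
    Function.Surjective (inducedMap r X h q) := by
  intro y
  obtain ⟨z, rfl⟩ := Submodule.Quotient.mk_surjective _ y
  obtain ⟨z', hz', hzz'⟩ := H z z.2
  exact ⟨Submodule.Quotient.mk ⟨z', hz'⟩, (Submodule.Quotient.eq _).2 hzz'⟩

variable {r X} {u v : Subsp l} {q : ℤ} {z : DFull l}

lemma mem_cobounds_erase (hvB : v ∈ B) (huv : u < v) (hzD : z ∈ Dcomp X (B.erase u) q)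
    (hzB : z ∈ cobounds r X B q) : z ∈ cobounds r X (B.erase u) q := by
  obtain ⟨w, hw, rfl⟩ := hzB.2
  refine ⟨hzD, retraction r u v w, retraction_mem_Dcomp hvB huv hw, ?_⟩
  rw [diff_retraction, retraction_apply, homotopy_eq_zero_of_mem_Dcomp hzD, diff_diff, map_zero,
    map_zero, sub_zero, sub_zero]

lemma exists_retraction_cohomologous (hvB : v ∈ B) (huv : u < v) (hz : z ∈ cocycles r X B q) :
    ∃ z' ∈ cocycles r X (B.erase u) q, z' - z ∈ cobounds r X B q := by
  obtain ⟨hzD, hdz⟩ := Submodule.mem_inf.1 hz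
  rw [LinearMap.mem_ker] at hdz
  have hPz := retraction_mem_Dcomp (r := r) hvB huv hzD
  have hdPz : diff r (retraction r u v z) = 0 := by rw [diff_retraction, hdz, map_zero]
  have hPz_sub : retraction r u v z - z = diff r (-homotopy r u v z) := by
    rw [map_neg, retraction_apply, hdz, map_zero, sub_zero]
    abel
  refine ⟨retraction r u v z, Submodule.mem_inf.2 ⟨hPz, hdPz⟩,
    sub_mem (Dcomp_mono X (erase_subset u B) q hPz) hzD, ?_⟩
  exact ⟨-homotopy r u v z, neg_mem (homotopy_mem_Dcomp hvB huv.le hzD), hPz_sub.symm⟩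

end Cohomology

end

theorem statement0_general {l : ℕ} (r : LinearOrder (Subsp l)) (B : Finset (Subsp l))
    (u v : Subsp l) (hv : v ∈ B) (huv : u < v) :
    ∀ q : ℤ, Function.Bijective (inducedMap r ⊤ (eraseSubset B u) q) := fun q =>
  ⟨inducedMap_injective r ⊤ _ q fun _ hz hzB => mem_cobounds_erase hv huv hz.1 hzB,
    inducedMap_surjective r ⊤ _ q fun _ hz => exists_retraction_cohomologous hv huv hz⟩

/-- Proposition 2.1 of the paper. Let `B` be a finite set of
linear subspaces of `ℂ^l` containing two subspaces `u ⊊ v`, and `B' = B ∖ {u}`.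
Then the inclusion of cochain complexes `D(B') ↪ D(B)` is a quasi-isomorphism:
it induces an isomorphism `H^q(D(B')) ≅ H^q(D(B))` in every degree `q`. -/
theorem statement0 {l : ℕ} (r : LinearOrder (Subsp l)) (B : Finset (Subsp l))
    (u v : Subsp l) (hu : u ∈ B) (hv : v ∈ B) (huv : u < v) :
    ∀ q : ℤ, Function.Bijective (inducedMap r ⊤ (eraseSubset B u) q) :=
  statement0_general r B u v hv huv
end

section
/- Let A be a subspace arrangement in ℂ^l, x₀ ∈ A, and A' = A \ {x₀}. Define the linear map φ : D(A) → D(Ã'') on basis elements by: φ(σ) = 0 if x₀ ∉ σ, or if x₀ ∈ σ and σ contains two distinct elements y, z of A' with x₀ ∩ y = x₀ ∩ z; and φ({x₀, x_{i_1}, …, x_{i_r}}) = (−1)^r {x₀ ∩ x_{i_1}, …, x₀ ∩ x_{i_r}} otherwise (in particular φ({x₀}) = ∅). Then φ commutes with the differentials: φ∘d = d∘φ. -/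
/-!
Formalization of the Yuzvinsky–Feichtner rational model `D(B)` of the
complement of an arrangement of linear subspaces of `ℂ^l`, together with the
deletion/restriction constructions of the paper.
-/

open scoped Classical

/-!
Fix a basis element `σ ∋ x₀` and put `τ = σ ∖ {x₀}`, `π y = x₀ ∩ y`. The term `σ ∖ {x₀}` of `dσ`
is killed by `φ`. If `π` is injective on `τ`, it matches the remaining terms of `dσ` with those of
`d φ(σ)`: `y` may be removed from `σ` iff `π y` may be removed from `π(τ)` (for `τ = {y}` this
uses that `x₀ ⊄ y`), and since `x₀` comes first and `π` is order preserving, positions drop by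
exactly one, which the sign `(-1)^r` of `φ` absorbs. If `π` is not injective on `τ`, then
`φ(σ) = 0`, and `φ(σ ∖ {y})` can only survive when `y` is one of a unique colliding pair `u < v`.
Then `σ ∖ {u}` and `σ ∖ {v}` have the same image under `φ`, and, `∼`-classes being intervals,
`u` and `v` are adjacent in `σ`, so the two terms cancel.
-/

namespace Finset

variable {α β : Type*} [DecidableEq α] {f : α → β} {s : Finset α} {u v : α}

lemma image_erase_of_injOn [DecidableEq β] (hf : Set.InjOn f s) (hu : u ∈ s) :
    (s.erase u).image f = (s.image f).erase (f u) := by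
  ext b
  simp only [mem_image, mem_erase]
  constructor
  · rintro ⟨a, ⟨hau, ha⟩, rfl⟩
    exact ⟨fun h => hau (hf ha hu h), a, ha, rfl⟩
  · rintro ⟨hb, a, ha, rfl⟩
    exact ⟨a, ⟨fun h => hb (h ▸ rfl), ha⟩, rfl⟩

lemma image_erase_of_apply_eq [DecidableEq β] (hv : v ∈ s) (hvu : v ≠ u) (h : f v = f u) :
    (s.erase u).image f = s.image f := by
  refine (image_subset_image (erase_subset u s)).antisymm fun b hb => ?_
  obtain ⟨a, ha, rfl⟩ := mem_image.1 hb
  by_cases hau : a = u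
  · subst hau
    exact mem_image.2 ⟨v, mem_erase.2 ⟨hvu, hv⟩, h⟩
  · exact mem_image_of_mem f (mem_erase.2 ⟨hau, ha⟩)

lemma exists_twin_of_injOn_erase (hu : u ∈ s) (hs : ¬ Set.InjOn f s)
    (hsu : Set.InjOn f (s.erase u)) : ∃ v ∈ s, v ≠ u ∧ f v = f u ∧ Set.InjOn f (s.erase v) := by
  have hmem : ∀ {a}, a ∈ s → a ≠ u → a ∈ (s.erase u : Set α) := fun ha hau =>
    mem_coe.2 (mem_erase.2 ⟨hau, ha⟩)
  obtain ⟨v, hv, hvu, hfv⟩ : ∃ v ∈ s, v ≠ u ∧ f v = f u := by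
    by_contra! hno
    refine hs fun a ha b hb hab => ?_
    by_cases hau : a = u <;> by_cases hbu : b = u
    · rw [hau, hbu]
    · exact absurd (hab.symm.trans (congrArg f hau)) (hno b hb hbu)
    · exact absurd (hab.trans (congrArg f hbu)) (hno a ha hau)
    · exact hsu (hmem ha hau) (hmem hb hbu) hab
  have htwin : ∀ a ∈ s, a ≠ v → f a = f u → a = u := fun a ha hav hau => by
    by_contra h
    exact hav (hsu (hmem ha h) (hmem hv hvu) (hau.trans hfv.symm))
  refine ⟨v, hv, hvu, hfv, fun a ha b hb hab => ?_⟩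
  obtain ⟨hav, ha⟩ := mem_erase.1 (mem_coe.1 ha)
  obtain ⟨hbv, hb⟩ := mem_erase.1 (mem_coe.1 hb)
  by_cases hau : a = u
  · subst hau
    exact (htwin b hb hbv hab.symm).symm
  by_cases hbu : b = u
  · subst hbu
    exact htwin a ha hav hab
  exact hsu (hmem ha hau) (hmem hb hbu) hab

end Finset

open Finset

section

variable {l : ℕ}

lemma inter_eq_inf_inter_erase {s : Finset (Subsp l)} {x : Subsp l} (hx : x ∈ s) :
    inter s = x ⊓ inter (s.erase x) := by
  conv_lhs => rw [inter, ← insert_erase hx, inf_insert]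
  rfl

lemma inter_image_inf_left (x₀ : Subsp l) {s : Finset (Subsp l)} (hs : s.Nonempty) :
    inter (s.image (x₀ ⊓ ·)) = x₀ ⊓ inter s := by
  obtain ⟨a, ha⟩ := hs
  rw [inter, inf_image]
  refine le_antisymm (le_inf ((inf_le ha).trans inf_le_left) ?_) ?_
  · exact Finset.le_inf fun b hb => (inf_le hb).trans inf_le_right
  · exact Finset.le_inf fun b hb => inf_le_inf_left x₀ (inf_le hb)

lemma inter_erase_eq_of_inf_eq {σ : Finset (Subsp l)} {x₀ y z : Subsp l} (hx₀ : x₀ ∈ σ)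
    (hy : y ∈ σ) (hz : z ∈ σ) (hx₀y : x₀ ≠ y) (hzy : z ≠ y) (h : x₀ ⊓ y = x₀ ⊓ z) :
    inter (σ.erase y) = inter σ := by
  have hle : inter (σ.erase y) ≤ y := calc
    inter (σ.erase y) ≤ x₀ ⊓ z :=
      le_inf (inf_le (mem_erase.2 ⟨hx₀y, hx₀⟩)) (inf_le (mem_erase.2 ⟨hzy, hz⟩))
    _ = x₀ ⊓ y := h.symm
    _ ≤ y := inf_le_right
  rw [inter_eq_inf_inter_erase hy, inf_eq_right.2 hle]

lemma inter_erase_eq_iff_image {σ : Finset (Subsp l)} {x₀ y : Subsp l} (hx₀ : x₀ ∈ σ)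
    (hy : y ∈ σ.erase x₀) (hxy : ¬ x₀ ≤ y) :
    inter (σ.erase y) = inter σ ↔
      inter (((σ.erase x₀).erase y).image (x₀ ⊓ ·)) = inter ((σ.erase x₀).image (x₀ ⊓ ·)) := by
  have hx₀y : x₀ ∈ σ.erase y := mem_erase.2 ⟨(ne_of_mem_erase hy).symm, hx₀⟩
  rw [inter_eq_inf_inter_erase hx₀y, erase_right_comm, inter_eq_inf_inter_erase hx₀,
    inter_image_inf_left x₀ ⟨y, hy⟩]
  rcases ((σ.erase x₀).erase y).eq_empty_or_nonempty with he | hne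
  · have hτ : σ.erase x₀ = {y} :=
      ((erase_eq_empty_iff _ _).1 he).resolve_left (ne_empty_of_mem hy)
    rw [he, hτ]
    simp only [inter, inf_empty, inf_singleton, id, inf_top_eq, image_empty]
    exact iff_of_false (fun h => hxy (left_eq_inf.1 h))
      (fun h => hxy (le_top.trans (h.le.trans inf_le_right)))
  · rw [inter_image_inf_left x₀ hne]

lemma pos_eq_pos_image_add_one (r : LinearOrder (Subsp l)) {σ : Finset (Subsp l)} {x₀ y : Subsp l}
    (hx₀ : x₀ ∈ σ) (hy : y ∈ σ.erase x₀) (hmin : ∀ z ∈ σ.erase x₀, r.lt x₀ z)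
    (hinj : Set.InjOn (x₀ ⊓ ·) ↑(σ.erase x₀))
    (hmono : ∀ z ∈ σ.erase x₀, ∀ w ∈ σ.erase x₀, r.lt z w → r.lt (x₀ ⊓ z) (x₀ ⊓ w)) :
    pos r σ y = pos r ((σ.erase x₀).image (x₀ ⊓ ·)) (x₀ ⊓ y) + 1 := by
  have hreflect : ∀ z ∈ σ.erase x₀, r.lt (x₀ ⊓ z) (x₀ ⊓ y) ↔ r.lt z y := fun z hz => by
    refine ⟨fun h => ?_, hmono z hz y hy⟩
    rcases @lt_trichotomy _ r z y with hzy | rfl | hyz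
    · exact hzy
    · exact absurd h (@lt_irrefl _ r.toPreorder _)
    · exact absurd (hmono y hy z hz hyz) (@lt_asymm _ r.toPreorder _ _ h)
  have hσ : (σ.filter (r.lt · y)).card = ((σ.erase x₀).filter (r.lt · y)).card + 1 := by
    rw [filter_erase, card_erase_add_one (mem_filter.2 ⟨hx₀, hmin y hy⟩)]
  rw [pos, pos, hσ, filter_image, filter_congr hreflect,
    card_image_of_injOn (hinj.mono (coe_subset.2 (filter_subset _ _)))]

lemma pos_eq_pos_add_one (r : LinearOrder (Subsp l)) {σ : Finset (Subsp l)} {u v : Subsp l}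
    (hu : u ∈ σ) (huv : r.lt u v) (hbetween : ∀ t ∈ σ, r.lt u t → ¬ r.lt t v) :
    pos r σ v = pos r σ u + 1 := by
  have hfilter : σ.filter (r.lt · v) = insert u (σ.filter (r.lt · u)) := by
    ext t
    simp only [mem_filter, mem_insert]
    constructor
    · rintro ⟨ht, htv⟩
      rcases @lt_trichotomy _ r t u with htu | rfl | hut
      · exact Or.inr ⟨ht, htu⟩
      · exact Or.inl rfl
      · exact absurd htv (hbetween t ht hut)
    · rintro (rfl | ⟨ht, htu⟩)
      · exact ⟨hu, huv⟩
      · exact ⟨ht, @lt_trans _ r.toPreorder _ _ _ htu huv⟩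
  have hu' : u ∉ σ.filter (r.lt · u) := fun h => @lt_irrefl _ r.toPreorder u (mem_filter.1 h).2
  rw [pos, pos, hfilter, card_insert_of_notMem hu']

lemma phiBasis_of_not_mem {x₀ : Subsp l} {σ : Finset (Subsp l)} (h : x₀ ∉ σ) :
    phiBasis x₀ σ = 0 :=
  if_neg fun h' => h h'.1

lemma phiBasis_of_not_injOn {x₀ : Subsp l} {σ : Finset (Subsp l)}
    (h : ¬ Set.InjOn (x₀ ⊓ ·) ↑(σ.erase x₀)) : phiBasis x₀ σ = 0 :=
  if_neg fun h' => h h'.2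

lemma phiBasis_of_injOn {x₀ : Subsp l} {σ : Finset (Subsp l)} (hx₀ : x₀ ∈ σ)
    (h : Set.InjOn (x₀ ⊓ ·) ↑(σ.erase x₀)) :
    phiBasis x₀ σ = (-1 : ℚ) ^ (σ.erase x₀).card •
      Finsupp.single ((σ.erase x₀).image (x₀ ⊓ ·)) 1 := by
  rw [phiBasis, if_pos ⟨hx₀, h⟩, card_erase_of_mem hx₀]

lemma phiBasis_erase_of_injOn {x₀ y : Subsp l} {σ : Finset (Subsp l)} (hx₀ : x₀ ∈ σ)
    (hy : y ∈ σ.erase x₀) (h : Set.InjOn (x₀ ⊓ ·) ↑((σ.erase x₀).erase y)) :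
    phiBasis x₀ (σ.erase y) = (-1 : ℚ) ^ ((σ.erase x₀).erase y).card •
      Finsupp.single (((σ.erase x₀).erase y).image (x₀ ⊓ ·)) 1 := by
  have hx₀y : x₀ ∈ σ.erase y := mem_erase.2 ⟨(ne_of_mem_erase hy).symm, hx₀⟩
  rw [phiBasis_of_injOn hx₀y (by rwa [erase_right_comm]), erase_right_comm]

end

section

variable {l : ℕ} (r : LinearOrder (Subsp l)) {x₀ : Subsp l} {σ : Finset (Subsp l)}

lemma phi_dBasis_eq_sum :
    phi x₀ (dBasis r σ) = ∑ x ∈ (σ.erase x₀).filter (fun x => inter (σ.erase x) = inter σ),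
      (-1 : ℚ) ^ pos r σ x • phiBasis x₀ (σ.erase x) := by
  rw [filter_erase, sum_erase _ (by rw [phiBasis_of_not_mem (notMem_erase x₀ σ), smul_zero]),
    dBasis, map_sum]
  exact sum_congr rfl fun x _ => by rw [map_smul, phi_apply_single]

lemma phi_dBasis_of_not_mem (h : x₀ ∉ σ) : phi x₀ (dBasis r σ) = 0 := by
  rw [phi_dBasis_eq_sum]
  exact sum_eq_zero fun x _ => by
    rw [phiBasis_of_not_mem fun hx => h (mem_of_mem_erase hx), smul_zero]

lemma phi_dBasis_of_injOn (hx₀ : x₀ ∈ σ) (hmin : ∀ y ∈ σ.erase x₀, r.lt x₀ y)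
    (hincomp : ∀ y ∈ σ.erase x₀, ¬ x₀ ≤ y) (hinj : Set.InjOn (x₀ ⊓ ·) ↑(σ.erase x₀))
    (hmono : ∀ y ∈ σ.erase x₀, ∀ z ∈ σ.erase x₀, r.lt y z → r.lt (x₀ ⊓ y) (x₀ ⊓ z)) :
    phi x₀ (dBasis r σ) = diff r (phiBasis x₀ σ) := by
  rw [phi_dBasis_eq_sum, phiBasis_of_injOn hx₀ hinj, map_smul, diff_apply_single, dBasis,
    filter_image, sum_image (hinj.mono (coe_subset.2 (filter_subset _ _))), smul_sum]
  refine sum_congr (filter_congr fun y hy => ?_) fun y hy => ?_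
  · rw [← image_erase_of_injOn hinj hy]
    exact inter_erase_eq_iff_image hx₀ hy (hincomp y hy)
  · replace hy := mem_of_mem_filter y hy
    rw [phiBasis_erase_of_injOn hx₀ hy (hinj.mono (coe_subset.2 (erase_subset y _))),
      ← image_erase_of_injOn hinj hy, pos_eq_pos_image_add_one r hx₀ hy hmin hinj hmono,
      ← card_erase_add_one hy, smul_smul, smul_smul]
    congr 1
    ring

lemma phi_dBasis_eq_zero_of_twins {u v : Subsp l} (hx₀ : x₀ ∈ σ) (hu : u ∈ σ.erase x₀)
    (hv : v ∈ σ.erase x₀) (huv : r.lt u v) (htwin : x₀ ⊓ u = x₀ ⊓ v)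
    (hinju : Set.InjOn (x₀ ⊓ ·) ↑((σ.erase x₀).erase u))
    (hinjv : Set.InjOn (x₀ ⊓ ·) ↑((σ.erase x₀).erase v))
    (hbetween : ∀ t ∈ σ, r.lt u t → ¬ r.lt t v) :
    phi x₀ (dBasis r σ) = 0 := by
  have hne : u ≠ v := @ne_of_lt _ r.toPreorder _ _ huv
  obtain ⟨hux₀, huσ⟩ := mem_erase.1 hu
  obtain ⟨hvx₀, hvσ⟩ := mem_erase.1 hv
  have hsub : {u, v} ⊆ (σ.erase x₀).filter (fun x => inter (σ.erase x) = inter σ) := by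
    rw [insert_subset_iff, singleton_subset_iff, mem_filter, mem_filter]
    exact ⟨⟨hu, inter_erase_eq_of_inf_eq hx₀ huσ hvσ hux₀.symm hne.symm htwin⟩,
      ⟨hv, inter_erase_eq_of_inf_eq hx₀ hvσ huσ hvx₀.symm hne htwin.symm⟩⟩
  have hrest : ∀ x ∈ (σ.erase x₀).filter (fun x => inter (σ.erase x) = inter σ),
      x ∉ ({u, v} : Finset (Subsp l)) → (-1 : ℚ) ^ pos r σ x • phiBasis x₀ (σ.erase x) = 0 := by
    intro x _ hx
    rw [mem_insert, mem_singleton, not_or] at hx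
    obtain ⟨hxu, hxv⟩ := hx
    refine smul_eq_zero_of_right _ (phiBasis_of_not_injOn fun h => hne (h ?_ ?_ htwin))
    · exact mem_coe.2 (mem_erase.2 ⟨hux₀, mem_erase.2 ⟨Ne.symm hxu, huσ⟩⟩)
    · exact mem_coe.2 (mem_erase.2 ⟨hvx₀, mem_erase.2 ⟨Ne.symm hxv, hvσ⟩⟩)
  rw [phi_dBasis_eq_sum, ← sum_subset hsub hrest, sum_pair hne,
    phiBasis_erase_of_injOn hx₀ hu hinju, phiBasis_erase_of_injOn hx₀ hv hinjv,
    image_erase_of_apply_eq hv hne.symm htwin.symm, image_erase_of_apply_eq hu hne htwin,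
    card_erase_of_mem hu, card_erase_of_mem hv, pos_eq_pos_add_one r huσ huv hbetween, pow_succ,
    mul_neg_one, neg_smul, add_neg_cancel]

lemma phi_dBasis_of_not_injOn (hx₀ : x₀ ∈ σ) (hmin : ∀ y ∈ σ.erase x₀, r.lt x₀ y)
    (hinterval : ∀ y ∈ σ.erase x₀, ∀ z ∈ σ.erase x₀, ∀ w ∈ σ.erase x₀,
      r.le y z → r.le z w → x₀ ⊓ y = x₀ ⊓ w → x₀ ⊓ y = x₀ ⊓ z)
    (hinj : ¬ Set.InjOn (x₀ ⊓ ·) ↑(σ.erase x₀)) :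
    phi x₀ (dBasis r σ) = 0 := by
  by_cases hex : ∃ w ∈ σ.erase x₀, Set.InjOn (x₀ ⊓ ·) ↑((σ.erase x₀).erase w)
  · obtain ⟨w, hw, hinjw⟩ := hex
    obtain ⟨z, hz, hzw, htwin, hinjz⟩ := exists_twin_of_injOn_erase hw hinj hinjw
    have hcancel : ∀ u ∈ σ.erase x₀, ∀ v ∈ σ.erase x₀, r.lt u v → x₀ ⊓ u = x₀ ⊓ v →
        Set.InjOn (x₀ ⊓ ·) ↑((σ.erase x₀).erase u) →
        Set.InjOn (x₀ ⊓ ·) ↑((σ.erase x₀).erase v) → phi x₀ (dBasis r σ) = 0 := by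
      intro u hu v hv huv htwin hinju hinjv
      refine phi_dBasis_eq_zero_of_twins r hx₀ hu hv huv htwin hinju hinjv fun t ht hut htv => ?_
      have htx₀ : t ≠ x₀ := by
        rintro rfl
        exact @lt_asymm _ r.toPreorder _ _ hut (hmin u hu)
      have ht' : t ∈ σ.erase x₀ := mem_erase.2 ⟨htx₀, ht⟩
      -- `t` lies in the `∼`-class of `u` and `v`, so it collides with `v` in `τ ∖ {u}`
      have htu : x₀ ⊓ u = x₀ ⊓ t := hinterval u hu t ht' v hv
        (@le_of_lt _ r.toPreorder _ _ hut) (@le_of_lt _ r.toPreorder _ _ htv) htwin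
      refine @ne_of_lt _ r.toPreorder _ _ htv (hinju ?_ ?_ (htu.symm.trans htwin))
      · exact mem_coe.2 (mem_erase.2 ⟨(@ne_of_lt _ r.toPreorder _ _ hut).symm, ht'⟩)
      · exact mem_coe.2 (mem_erase.2 ⟨(@ne_of_lt _ r.toPreorder _ _ huv).symm, hv⟩)
    rcases @lt_trichotomy _ r w z with h | rfl | h
    · exact hcancel w hw z hz h htwin.symm hinjw hinjz
    · exact absurd rfl hzw
    · exact hcancel z hz w hw h htwin hinjz hinjw
  · push Not at hex
    rw [phi_dBasis_eq_sum]
    refine sum_eq_zero fun x hx => ?_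
    rw [phiBasis_of_not_injOn (by rw [erase_right_comm]; exact hex x (mem_of_mem_filter x hx)),
      smul_zero]

lemma phi_dBasis {A : Finset (Subsp l)} (harr : IsArrangement A) (hx₀ : x₀ ∈ A)
    (hord : GoodOrder r A x₀) (hσ : σ ⊆ A) :
    phi x₀ (dBasis r σ) = diff r (phiBasis x₀ σ) := by
  by_cases hx₀σ : x₀ ∈ σ
  swap
  · rw [phi_dBasis_of_not_mem r hx₀σ, phiBasis_of_not_mem hx₀σ, map_zero]
  have hτ : σ.erase x₀ ⊆ A.erase x₀ := erase_subset_erase x₀ hσ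
  have hmin : ∀ y ∈ σ.erase x₀, r.lt x₀ y := fun y hy => hord.1 y (hτ hy)
  by_cases hinj : Set.InjOn (x₀ ⊓ ·) ↑(σ.erase x₀)
  · refine phi_dBasis_of_injOn r hx₀σ hmin (fun y hy hle => ?_) hinj fun y hy z hz hyz => ?_
    · exact ne_of_mem_erase hy (harr x₀ hx₀ y (hσ (mem_of_mem_erase hy)) hle).symm
    · exact hord.2.2 y (hτ hy) z (hτ hz) hyz fun h =>
        @ne_of_lt _ r.toPreorder _ _ hyz (hinj (mem_coe.2 hy) (mem_coe.2 hz) h)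
  · rw [phi_dBasis_of_not_injOn r hx₀σ hmin
      (fun y hy z hz w hw => hord.2.1 y (hτ hy) z (hτ hz) w (hτ hw)) hinj,
      phiBasis_of_not_injOn hinj, map_zero]

end

/-- Lemma 3.1. The map `φ : D(A) → D(Ã'')` commutes with the
differentials, the fixed linear order being chosen as in the paper (`x₀` first,
`∼`-classes consecutive, and the order of `Ã''` compatible with that of `A'`). -/
theorem statement2 {l : ℕ} (r : LinearOrder (Subsp l)) (A : Finset (Subsp l))
    (harr : IsArrangement A) (x₀ : Subsp l) (hx₀ : x₀ ∈ A) (hord : GoodOrder r A x₀) :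
    ∀ f ∈ Dsub A, phi x₀ (diff r f) = diff r (phi x₀ f) := by
  intro f hf
  refine LinearMap.eqOn_span (f := (phi x₀).comp (diff r)) (g := (diff r).comp (phi x₀)) ?_ hf
  rintro _ ⟨σ, hσ, rfl⟩
  simpa only [LinearMap.comp_apply, diff_apply_single, phi_apply_single] using
    phi_dBasis r harr hx₀ hord hσ
end

section
/- Let A be a subspace arrangement in ℂ^l, x₀ ∈ A, A' = A \ {x₀}, and E = {(y,z) ∈ A' × A' : x₀ ∩ y = x₀ ∩ z and y ≠ z}. For (u,v) ∈ E let I_{u,v} ⊆ D(A)/D(A') be the span of all elements {x₀, u, y_{j_1}, …, y_{j_r}} − {x₀, v, y_{j_1}, …, y_{j_r}} and all {x₀, u, v, y_{j_1}, …, y_{j_r}} with y_{j_k} ∈ A \ {x₀, u, v}, and set V = Σ_{(u,v) ∈ E} I_{u,v}. Then V equals the kernel of the induced map φ̄ : D(A)/D(A') → D(Ã''). -/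
/-!
Formalization of the Yuzvinsky–Feichtner rational model `D(B)` of the
complement of an arrangement of linear subspaces of `ℂ^l`, together with the
deletion/restriction constructions of the paper.
-/

open scoped Classical

/-!
`φ` kills the generators of every `I_{u,v}`: the two sets `{x₀, u} ∪ τ` and `{x₀, v} ∪ τ` have
the same image, and on `{x₀, u, v} ∪ τ` the map `y ↦ x₀ ∩ y` is not injective. Conversely, fix a
representative of each `∼`-class. Modulo the preimage of `V`, every basis element of `D(A)` is
congruent to one whose members other than `x₀` are representatives, and `φ` is injective on the
span of those, since lifting each `x₀ ∩ y` back to its representative inverts it. So an element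
of `D(A)` killed by `φ` lies in the preimage of `V`.
-/

noncomputable section

lemma coe_subset_sdiff_of_subset_erase {α : Type*} [DecidableEq α] {A τ : Finset α} {x u v : α}
    (hτ : τ ⊆ A.erase x) (hu : u ∉ τ) (hv : v ∉ τ) : (↑τ : Set α) ⊆ ↑A \ {x, u, v} :=
  fun w hw => by
    obtain ⟨hwx, hwA⟩ := Finset.mem_erase.mp (hτ hw)
    exact ⟨hwA, by rintro (rfl | rfl | rfl) <;> simp_all⟩

variable {l : ℕ}

lemma Dsub_mono {B B' : Finset (Subsp l)} (h : B' ⊆ B) : Dsub B' ≤ Dsub B :=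
  Submodule.span_mono (by rintro f ⟨σ, hσ, rfl⟩; exact ⟨σ, hσ.trans h, rfl⟩)

lemma phiBar_quotProj (A : Finset (Subsp l)) (x₀ : Subsp l) (v : Dsub A) :
    phiBar x₀ A (quotProj A x₀ v) = phi x₀ v :=
  Submodule.liftQ_apply _ _ v

/-- Writing `σ = {x₀} ∪ μ` avoids the truncated `|σ| - 1` in `phiBasis`. -/
lemma phiBasis_insert {x₀ : Subsp l} {μ : Finset (Subsp l)} (hx₀ : x₀ ∉ μ) :
    phiBasis x₀ (insert x₀ μ) =
      if (μ.image fun y => x₀ ⊓ y).card = μ.card then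
        ((-1 : ℚ) ^ μ.card) • Finsupp.single (μ.image fun y => x₀ ⊓ y) (1 : ℚ)
      else 0 := by
  simp [phiBasis, Finset.erase_insert hx₀, Finset.card_insert_of_notMem hx₀,
    Finset.card_image_iff]

lemma phiBasis_insert_congr {x₀ : Subsp l} {μ μ' : Finset (Subsp l)} (hμ : x₀ ∉ μ)
    (hμ' : x₀ ∉ μ') (hcard : μ.card = μ'.card)
    (himage : (μ.image fun y => x₀ ⊓ y) = μ'.image fun y => x₀ ⊓ y) :
    phiBasis x₀ (insert x₀ μ) = phiBasis x₀ (insert x₀ μ') := by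
  rw [phiBasis_insert hμ, phiBasis_insert hμ', hcard, himage]

lemma phiBasis_eq_zero_of_collision {x₀ u v : Subsp l} {μ : Finset (Subsp l)} (hx₀ : x₀ ∉ μ)
    (hu : u ∈ μ) (hv : v ∈ μ) (huv : u ≠ v) (hmeet : x₀ ⊓ u = x₀ ⊓ v) :
    phiBasis x₀ (insert x₀ μ) = 0 := by
  rw [phiBasis_insert hx₀, if_neg fun h => huv (Finset.card_image_iff.mp h hu hv hmeet)]

lemma IuvFull_le_ker_phi {A : Finset (Subsp l)} {x₀ u v : Subsp l} (hux : u ≠ x₀)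
    (hvx : v ≠ x₀) (huv : u ≠ v) (hmeet : x₀ ⊓ u = x₀ ⊓ v) :
    IuvFull A x₀ u v ≤ LinearMap.ker (phi x₀) := by
  have hout {τ : Finset (Subsp l)} (hτ : (↑τ : Set (Subsp l)) ⊆ ↑A \ {x₀, u, v}) :
      x₀ ∉ τ ∧ u ∉ τ ∧ v ∉ τ :=
    ⟨fun h => (hτ h).2 (by simp), fun h => (hτ h).2 (by simp), fun h => (hτ h).2 (by simp)⟩
  rw [IuvFull, Submodule.span_le]
  rintro f (⟨τ, hτ, rfl⟩ | ⟨τ, hτ, rfl⟩) <;> obtain ⟨hxτ, huτ, hvτ⟩ := hout hτ <;>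
    simp only [SetLike.mem_coe, LinearMap.mem_ker, map_sub, phi_apply_single]
  · rw [sub_eq_zero]
    refine phiBasis_insert_congr (by simp [hxτ, hux.symm]) (by simp [hxτ, hvx.symm]) ?_ ?_
    · rw [Finset.card_insert_of_notMem huτ, Finset.card_insert_of_notMem hvτ]
    · rw [Finset.image_insert, Finset.image_insert, hmeet]
  · exact phiBasis_eq_zero_of_collision (by simp [hxτ, hux.symm, hvx.symm]) (by simp)
      (by simp) huv hmeet

lemma IuvFull_le_Dsub {A : Finset (Subsp l)} {x₀ u v : Subsp l} (hx₀ : x₀ ∈ A) (hu : u ∈ A)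
    (hv : v ∈ A) : IuvFull A x₀ u v ≤ Dsub A := by
  have hτA {τ : Finset (Subsp l)} (hτ : (↑τ : Set (Subsp l)) ⊆ ↑A \ {x₀, u, v}) : τ ⊆ A :=
    fun w hw => (hτ hw).1
  rw [IuvFull, Submodule.span_le]
  rintro f (⟨τ, hτ, rfl⟩ | ⟨τ, hτ, rfl⟩)
  · refine Submodule.sub_mem _ (Submodule.subset_span ⟨_, ?_, rfl⟩)
      (Submodule.subset_span ⟨_, ?_, rfl⟩) <;>
    simp [Finset.insert_subset_iff, hx₀, hu, hv, hτA hτ]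
  · exact Submodule.subset_span ⟨_, by simp [Finset.insert_subset_iff, hx₀, hu, hv, hτA hτ], rfl⟩

lemma Vsub_le_ker_phiBar (A : Finset (Subsp l)) (x₀ : Subsp l) :
    Vsub A x₀ ≤ LinearMap.ker (phiBar x₀ A) := by
  refine iSup₂_le fun p ⟨hp₁, hp₂, hmeet, hne⟩ => Submodule.map_le_iff_le_comap.mpr fun w hw => ?_
  rw [Submodule.mem_comap, LinearMap.mem_ker, phiBar_quotProj]
  exact IuvFull_le_ker_phi (Finset.ne_of_mem_erase hp₁) (Finset.ne_of_mem_erase hp₂) hne hmeet hw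

def Vlift (A : Finset (Subsp l)) (x₀ : Subsp l) : Submodule ℚ (DFull l) :=
  ((Vsub A x₀).comap (quotProj A x₀)).map (Dsub A).subtype

lemma mem_Vlift {A : Finset (Subsp l)} {x₀ : Subsp l} {f : DFull l} (hf : f ∈ Dsub A) :
    f ∈ Vlift A x₀ ↔ quotProj A x₀ ⟨f, hf⟩ ∈ Vsub A x₀ :=
  ⟨by rintro ⟨w, hw, rfl⟩; exact hw, fun h => ⟨⟨f, hf⟩, h, rfl⟩⟩

lemma Vlift_le_ker_phi (A : Finset (Subsp l)) (x₀ : Subsp l) :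
    Vlift A x₀ ≤ LinearMap.ker (phi x₀) := by
  rintro _ ⟨w, hw, rfl⟩
  have := Vsub_le_ker_phiBar A x₀ hw
  rwa [LinearMap.mem_ker, phiBar_quotProj] at this

lemma Dsub_erase_le_Vlift (A : Finset (Subsp l)) (x₀ : Subsp l) :
    Dsub (A.erase x₀) ≤ Vlift A x₀ := fun f hf => by
  have hfA := Dsub_mono (Finset.erase_subset x₀ A) hf
  have hzero : quotProj A x₀ ⟨f, hfA⟩ = 0 := (Submodule.Quotient.mk_eq_zero _).mpr hf
  rw [mem_Vlift hfA, hzero]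
  exact zero_mem _

lemma IuvFull_le_Vlift {A : Finset (Subsp l)} {x₀ u v : Subsp l} (hx₀ : x₀ ∈ A)
    (huv : (u, v) ∈ Epairs A x₀) : IuvFull A x₀ u v ≤ Vlift A x₀ := fun f hf => by
  have hfA := IuvFull_le_Dsub hx₀ (Finset.mem_of_mem_erase huv.1)
    (Finset.mem_of_mem_erase huv.2.1) hf
  rw [mem_Vlift hfA]
  exact le_iSup₂_of_le (f := fun p (_ : p ∈ Epairs A x₀) => Iuv A x₀ p.1 p.2) (u, v) huv le_rfl
    (Submodule.mem_map_of_mem hf)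

def classRep (A : Finset (Subsp l)) (x₀ : Subsp l) : Subsp l → Subsp l :=
  Function.invFunOn (fun y => x₀ ⊓ y) ↑(A.erase x₀)

lemma classRep_spec {A : Finset (Subsp l)} {x₀ y : Subsp l} (hy : y ∈ A.erase x₀) :
    classRep A x₀ (x₀ ⊓ y) ∈ A.erase x₀ ∧ x₀ ⊓ classRep A x₀ (x₀ ⊓ y) = x₀ ⊓ y :=
  ⟨Function.invFunOn_mem ⟨y, hy, rfl⟩, Function.invFunOn_eq ⟨y, hy, rfl⟩⟩

def nonReps (A : Finset (Subsp l)) (x₀ : Subsp l) (μ : Finset (Subsp l)) : Finset (Subsp l) :=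
  μ.filter fun y => classRep A x₀ (x₀ ⊓ y) ≠ y

def canonicalSpan (A : Finset (Subsp l)) (x₀ : Subsp l) : Submodule ℚ (DFull l) :=
  Submodule.span ℚ {f | ∃ μ : Finset (Subsp l), x₀ ∉ μ ∧
    (∀ y ∈ μ, classRep A x₀ (x₀ ⊓ y) = y) ∧ f = Finsupp.single (insert x₀ μ) (1 : ℚ)}

def psi (A : Finset (Subsp l)) (x₀ : Subsp l) : DFull l →ₗ[ℚ] DFull l :=
  Finsupp.lsum ℚ fun ν => LinearMap.toSpanSingleton ℚ (DFull l)
    (((-1 : ℚ) ^ ν.card) • Finsupp.single (insert x₀ (ν.image (classRep A x₀))) (1 : ℚ))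

lemma psi_apply_single (A : Finset (Subsp l)) (x₀ : Subsp l) (ν : Finset (Subsp l)) :
    psi A x₀ (Finsupp.single ν (1 : ℚ)) =
      ((-1 : ℚ) ^ ν.card) • Finsupp.single (insert x₀ (ν.image (classRep A x₀))) (1 : ℚ) := by
  simp [psi]

lemma psi_phi_of_mem_canonicalSpan {A : Finset (Subsp l)} {x₀ : Subsp l} {c : DFull l}
    (hc : c ∈ canonicalSpan A x₀) : psi A x₀ (phi x₀ c) = c := by
  refine LinearMap.eqOn_span (f := psi A x₀ ∘ₗ phi x₀) (g := LinearMap.id) ?_ hc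
  rintro _ ⟨μ, hx₀, hrep, rfl⟩
  have hinj : Set.InjOn (fun y => x₀ ⊓ y) ↑μ := fun a ha b hb hab => by
    rw [← hrep a ha, ← hrep b hb]
    exact congrArg _ hab
  have himage : ((μ.image fun y => x₀ ⊓ y).image (classRep A x₀)) = μ := by
    rw [Finset.image_image]
    exact (Finset.image_congr fun y hy => hrep y hy).trans Finset.image_id
  have hcard : (μ.image fun y => x₀ ⊓ y).card = μ.card := Finset.card_image_iff.mpr hinj
  rw [LinearMap.comp_apply, phi_apply_single, phiBasis_insert hx₀, if_pos hcard, map_smul,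
    psi_apply_single, hcard, himage, smul_smul, ← pow_add, ← two_mul, pow_mul, neg_one_sq,
    one_pow, one_smul, LinearMap.id_apply]

lemma disjoint_canonicalSpan_ker_phi (A : Finset (Subsp l)) (x₀ : Subsp l) :
    Disjoint (canonicalSpan A x₀) (LinearMap.ker (phi x₀)) :=
  LinearMap.disjoint_ker.mpr fun c hc hφ => by
    rw [← psi_phi_of_mem_canonicalSpan hc, hφ, map_zero]

/-- Modulo the generators of the `I_{u,v}`, each non-representative in `μ` is either swapped for
its class representative (which strictly decreases `nonReps`) or collides with it. -/
theorem single_insert_mem_Vlift_sup_canonicalSpan {A : Finset (Subsp l)} {x₀ : Subsp l}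
    (hx₀ : x₀ ∈ A) (μ : Finset (Subsp l)) (hμ : μ ⊆ A.erase x₀) :
    Finsupp.single (insert x₀ μ) (1 : ℚ) ∈ Vlift A x₀ ⊔ canonicalSpan A x₀ := by
  have hx₀μ : x₀ ∉ μ := fun h => Finset.notMem_erase x₀ A (hμ h)
  by_cases hgood : ∀ y ∈ μ, classRep A x₀ (x₀ ⊓ y) = y
  · exact Submodule.mem_sup_right (Submodule.subset_span ⟨μ, hx₀μ, hgood, rfl⟩)
  push Not at hgood
  obtain ⟨y, hy, hyrep⟩ := hgood
  obtain ⟨hvA, hvmeet⟩ := classRep_spec (hμ hy)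
  set v := classRep A x₀ (x₀ ⊓ y)
  have hE : (y, v) ∈ Epairs A x₀ := ⟨hμ hy, hvA, hvmeet.symm, Ne.symm hyrep⟩
  by_cases hvμ : v ∈ μ
  · have hσ : insert x₀ μ = insert x₀ (insert y (insert v ((μ.erase y).erase v))) := by
      rw [Finset.insert_erase (Finset.mem_erase.mpr ⟨hyrep, hvμ⟩), Finset.insert_erase hy]
    have hτ := coe_subset_sdiff_of_subset_erase
      (((Finset.erase_subset _ _).trans (Finset.erase_subset _ _)).trans hμ)
      (fun h => Finset.notMem_erase y μ (Finset.mem_of_mem_erase h)) (Finset.notMem_erase v _)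
    exact Submodule.mem_sup_left (IuvFull_le_Vlift hx₀ hE
      (Submodule.subset_span (Or.inr ⟨_, hτ, by rw [hσ]⟩)))
  · have hτ := coe_subset_sdiff_of_subset_erase ((Finset.erase_subset y μ).trans hμ)
      (Finset.notMem_erase y μ) (fun h => hvμ (Finset.mem_of_mem_erase h))
    have hpair : Finsupp.single (insert x₀ μ) (1 : ℚ)
        - Finsupp.single (insert x₀ (insert v (μ.erase y))) (1 : ℚ) ∈ Vlift A x₀ :=
      IuvFull_le_Vlift hx₀ hE (Submodule.subset_span
        (Or.inl ⟨μ.erase y, hτ, by rw [Finset.insert_erase hy]⟩))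
    have hv'μ : insert v (μ.erase y) ⊆ A.erase x₀ :=
      Finset.insert_subset hvA ((Finset.erase_subset y μ).trans hμ)
    have hdecr : (nonReps A x₀ (insert v (μ.erase y))).card < (nonReps A x₀ μ).card := by
      have hvrep : classRep A x₀ (x₀ ⊓ v) = v := by rw [hvmeet]
      rw [nonReps, Finset.filter_insert, if_neg (not_not.mpr hvrep), Finset.filter_erase]
      exact Finset.card_erase_lt_of_mem (Finset.mem_filter.mpr ⟨hy, hyrep⟩)
    have ih := single_insert_mem_Vlift_sup_canonicalSpan hx₀ _ hv'μ
    simpa using Submodule.add_mem _ (Submodule.mem_sup_left hpair) ih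
termination_by (nonReps A x₀ μ).card
decreasing_by exact hdecr

lemma Dsub_le_Vlift_sup_canonicalSpan {A : Finset (Subsp l)} {x₀ : Subsp l} (hx₀ : x₀ ∈ A) :
    Dsub A ≤ Vlift A x₀ ⊔ canonicalSpan A x₀ := by
  rw [Dsub, Submodule.span_le]
  rintro _ ⟨σ, hσ, rfl⟩
  by_cases hx₀σ : x₀ ∈ σ
  · rw [← Finset.insert_erase hx₀σ]
    exact single_insert_mem_Vlift_sup_canonicalSpan hx₀ _ (Finset.erase_subset_erase x₀ hσ)
  · refine Submodule.mem_sup_left (Dsub_erase_le_Vlift A x₀ (Submodule.subset_span ⟨σ, ?_, rfl⟩))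
    exact fun y hy => Finset.mem_erase.mpr ⟨fun h => hx₀σ (h ▸ hy), hσ hy⟩

end

theorem statement4_general {l : ℕ} (A : Finset (Subsp l))
    (x₀ : Subsp l) (hx₀ : x₀ ∈ A) :
    Vsub A x₀ = LinearMap.ker (phiBar x₀ A) := by
  refine le_antisymm (Vsub_le_ker_phiBar A x₀) fun x hx => ?_
  obtain ⟨v, rfl⟩ := Submodule.mkQ_surjective _ x
  have hv : (v : DFull l) ∈ (Vlift A x₀ ⊔ canonicalSpan A x₀) ⊓ LinearMap.ker (phi x₀) := by
    refine Submodule.mem_inf.mpr ⟨Dsub_le_Vlift_sup_canonicalSpan hx₀ v.2, ?_⟩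
    rwa [LinearMap.mem_ker, ← phiBar_quotProj]
  rw [sup_inf_assoc_of_le _ (Vlift_le_ker_phi A x₀),
    (disjoint_canonicalSpan_ker_phi A x₀).eq_bot, sup_bot_eq] at hv
  exact (mem_Vlift v.2).mp hv

/-- Lemma 3.2. In `D(A)/D(A')`, the subspace
`V = Σ_{(u,v) ∈ E} I_{u,v}` equals the kernel of the induced map
`φ̄ : D(A)/D(A') → D(Ã'')`. -/
theorem statement4 {l : ℕ} (A : Finset (Subsp l))
    (harr : IsArrangement A) (x₀ : Subsp l) (hx₀ : x₀ ∈ A) :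
    Vsub A x₀ = LinearMap.ker (phiBar x₀ A) :=
  statement4_general A x₀ hx₀
end
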